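/- arXiv:1912.04160 — 7 statements merged into one kernel-verified Lean document; each statement's English description precedes it below -/
import Mathlib

section
/- For a symmetric positive-definite kernel K on a measurable space and probability measures P, Q with Bochner-integrable kernel mean embeddings μ_P, μ_Q into the RKHS H_K, the maximum mean discrepancy satisfies γ_K²(P,Q) = E[K(X,X')] + E[K(Y,Y')] − 2E[K(X,Y)] = ‖μ_P − μ_Q‖²_{H_K}, where X,X' ~ P i.i.d. and Y,Y' ~ Q i.i.d., all independent. -/
open MeasureTheory
open scoped RealInnerProductSpace

/-- For a symmetric positive-definite kernel K (realized via a feature map φ into its RKHS H)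
and probability measures P, Q with Bochner-integrable kernel mean embeddings,
γ_K²(P,Q) = E K(X,X') + E K(Y,Y') − 2 E K(X,Y) = ‖μ_P − μ_Q‖². -/
theorem mmd_eq_norm_sq_embedding_diff
    {S H : Type*} [MeasurableSpace S]
    [NormedAddCommGroup H] [InnerProductSpace ℝ H] [CompleteSpace H]
    (K : S → S → ℝ) (φ : S → H) (hK : ∀ x y, K x y = ⟪φ x, φ y⟫)
    (P Q : Measure S) [IsProbabilityMeasure P] [IsProbabilityMeasure Q]
    (hφP : Integrable φ P) (hφQ : Integrable φ Q)
    (hPP : Integrable (fun p : S × S => K p.1 p.2) (P.prod P))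
    (hQQ : Integrable (fun p : S × S => K p.1 p.2) (Q.prod Q))
    (hPQ : Integrable (fun p : S × S => K p.1 p.2) (P.prod Q)) :
    (∫ x, ∫ x', K x x' ∂P ∂P) + (∫ y, ∫ y', K y y' ∂Q ∂Q)
      - 2 * (∫ x, ∫ y, K x y ∂Q ∂P)
      = ‖(∫ x, φ x ∂P) - (∫ y, φ y ∂Q)‖ ^ 2 := by
  set μP := ∫ x, φ x ∂P with hμP
  set μQ := ∫ y, φ y ∂Q with hμQ
  have key : ∀ (ν ρ : Measure S), Integrable φ ν → Integrable φ ρ →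
      (∫ x, ∫ y, K x y ∂ρ ∂ν) = ⟪∫ x, φ x ∂ν, ∫ y, φ y ∂ρ⟫ := by
    intro ν ρ hν hρ
    have h1 : ∀ x, (∫ y, K x y ∂ρ) = ⟪φ x, ∫ y, φ y ∂ρ⟫ := by
      intro x
      simp only [hK]
      exact integral_inner hρ (φ x)
    calc (∫ x, ∫ y, K x y ∂ρ ∂ν)
        = ∫ x, ⟪∫ y, φ y ∂ρ, φ x⟫ ∂ν := by
          simp_rw [h1, real_inner_comm]
      _ = ⟪∫ y, φ y ∂ρ, ∫ x, φ x ∂ν⟫ := integral_inner hν _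
      _ = _ := real_inner_comm _ _
  rw [key P P hφP hφP, key Q Q hφQ hφQ, key P Q hφP hφQ]
  rw [← hμP, ← hμQ]
  have := @norm_sub_sq_real H _ _ μP μQ
  rw [this, ← real_inner_self_eq_norm_sq, ← real_inner_self_eq_norm_sq]
  ring
end

section
/- Let γ : A × A → ℝ be a continuous symmetric function of negative type on a metric space A, let S ⊆ A be measurable, and let P, Q be probability measures on A with P(S) > 0 and Q(S) > 0 and γ integrable against the relevant product measures. Then 2·[∫_S∫_S γ dP dQ / (P(S)Q(S))] − [∫_S∫_S γ dP dP / P(S)²] − [∫_S∫_S γ dQ dQ / Q(S)²] ≥ 0. -/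
/-!
Fix a base point `o` at which `γ(·, o)` is integrable for both measures. Since `γ` has negative
type, the centered kernel `k(x, y) = γ(x, o) + γ(y, o) - γ(x, y) - γ(o, o)` is positive
semidefinite, and for probability measures `ρ, σ` its energy `∫∫ k d(ρ - σ) d(ρ - σ)` is the
negative of `2 ∫∫ γ dρ dσ - ∫∫ γ dρ dρ - ∫∫ γ dσ dσ`; take `ρ = P[|S]`, `σ = Q[|S]`.

A positive semidefinite kernel has nonnegative energy: integrating the Gram form of `n`
independent samples from `ρ` and `n` from `σ`, with weights `±1`, gives `n² E + O(n) ≥ 0`. The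
`O(n)` diagonal terms require `k(x, x)` to be integrable; this is arranged by truncating `k` to the
points where `|k(x, x)| ≤ m`, which keeps it positive semidefinite, and letting `m → ∞` by
dominated convergence.
-/

open MeasureTheory ProbabilityTheory Function Filter Topology

section

variable {A : Type*}

def IsPosSemidefKernel (κ : A → A → ℝ) : Prop :=
  ∀ (n : ℕ) (x : Fin n → A) (c : Fin n → ℝ), 0 ≤ ∑ i, ∑ j, c i * c j * κ (x i) (x j)

def IsNegativeTypeKernel (γ : A → A → ℝ) : Prop :=
  ∀ (n : ℕ) (x : Fin n → A) (c : Fin n → ℝ), ∑ i, c i = 0 →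
    ∑ i, ∑ j, c i * c j * γ (x i) (x j) ≤ 0

def centeredKernel (γ : A → A → ℝ) (o : A) (x y : A) : ℝ :=
  γ x o + γ y o - γ x y - γ o o

lemma IsPosSemidefKernel.sum_nonneg {κ : A → A → ℝ} (hκ : IsPosSemidefKernel κ)
    {ι : Type*} [Fintype ι] (x : ι → A) (c : ι → ℝ) :
    0 ≤ ∑ i, ∑ j, c i * c j * κ (x i) (x j) := by
  let e := Fintype.equivFin ι
  convert hκ _ (x ∘ e.symm) (c ∘ e.symm) using 1
  rw [← e.symm.sum_comp]
  exact Finset.sum_congr rfl fun i _ => (e.symm.sum_comp _).symm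

lemma IsPosSemidefKernel.mul_weight {κ : A → A → ℝ} (hκ : IsPosSemidefKernel κ) (u : A → ℝ) :
    IsPosSemidefKernel fun x y => u x * u y * κ x y := fun n x c =>
  (hκ n x fun i => c i * u (x i)).trans_eq <|
    Finset.sum_congr rfl fun _ _ => Finset.sum_congr rfl fun _ _ => by ring

lemma centeredKernel_symm {γ : A → A → ℝ} (hsymm : ∀ x y, γ x y = γ y x) (o x y : A) :
    centeredKernel γ o x y = centeredKernel γ o y x := by
  rw [centeredKernel, centeredKernel, hsymm x y]
  ring

lemma IsNegativeTypeKernel.isPosSemidefKernel_centeredKernel {γ : A → A → ℝ}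
    (hγ : IsNegativeTypeKernel γ) (hsymm : ∀ x y, γ x y = γ y x) (o : A) :
    IsPosSemidefKernel (centeredKernel γ o) := by
  intro n x c
  -- negative type applied to the points `o, x₀, …` with the zero-sum weights `-∑ c, c₀, …`
  set s := ∑ i, c i
  set T := ∑ i, c i * γ (x i) o
  set G := ∑ i, ∑ j, c i * c j * γ (x i) (x j)
  let x' : Fin (n + 1) → A := Fin.cons o x
  let c' : Fin (n + 1) → ℝ := Fin.cons (-s) c
  have hext := hγ (n + 1) x' c' (by simp [c', Fin.sum_univ_succ, s])
  have hsT : ∑ i, c i * -s * γ (x i) o = -(s * T) := by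
    simp only [T, Finset.mul_sum, ← Finset.sum_neg_distrib]
    exact Finset.sum_congr rfl fun _ _ => by ring
  have hsT' : ∑ i, -s * c i * γ (x i) o = -(s * T) := by
    rw [← hsT]
    exact Finset.sum_congr rfl fun _ _ => by ring
  have hext_eq : ∑ i, ∑ j, c' i * c' j * γ (x' i) (x' j) = s * s * γ o o - 2 * s * T + G := by
    simp only [x', c', Fin.sum_univ_succ, Fin.cons_zero, Fin.cons_succ, Finset.sum_add_distrib,
      hsymm o, hsT, hsT']
    ring
  have hcentered : ∑ i, ∑ j, c i * c j * centeredKernel γ o (x i) (x j)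
      = 2 * s * T - G - s * s * γ o o := by
    have e1 : ∑ i, ∑ j, c i * c j * γ (x i) o = s * T := by
      rw [mul_comm, Finset.sum_mul_sum]
      exact Finset.sum_congr rfl fun _ _ => Finset.sum_congr rfl fun _ _ => by ring
    have e2 : ∑ i, ∑ j, c i * c j * γ (x j) o = s * T := by
      rw [Finset.sum_mul_sum]
      exact Finset.sum_congr rfl fun _ _ => Finset.sum_congr rfl fun _ _ => by ring
    have e3 : ∑ i, ∑ j, c i * c j * γ o o = s * s * γ o o := by
      rw [Finset.sum_mul_sum]
      simp only [Finset.sum_mul]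
    simp only [centeredKernel, mul_sub, mul_add, Finset.sum_sub_distrib, Finset.sum_add_distrib,
      e1, e2, e3]
    ring
  linarith

lemma uncurry_comp_swap_of_symm {κ : A → A → ℝ} (hsymm : ∀ x y, κ x y = κ y x) :
    uncurry κ ∘ Prod.swap = uncurry κ :=
  funext fun p => hsymm p.2 p.1

lemma nonneg_of_forall_sq_mul_add_mul_nonneg {a b : ℝ}
    (h : ∀ n : ℕ, 0 ≤ (n : ℝ) ^ 2 * a + n * b) : 0 ≤ a := by
  by_contra! ha
  obtain ⟨n, hn⟩ := exists_nat_gt (max (b / -a) 0)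
  have hn0 : (0 : ℝ) < n := (le_max_right _ _).trans_lt hn
  have hlin : (n : ℝ) * a + b < 0 := by
    have := (le_max_left _ _).trans_lt hn
    rw [div_lt_iff₀ (neg_pos.2 ha)] at this
    linarith
  nlinarith [h n]

noncomputable def diagCutoff (κ : A → A → ℝ) (m : ℕ) : A → ℝ :=
  {x | |κ x x| ≤ m}.indicator 1

noncomputable def diagTruncation (κ : A → A → ℝ) (m : ℕ) (x y : A) : ℝ :=
  diagCutoff κ m x * diagCutoff κ m y * κ x y

lemma diagCutoff_nonneg (κ : A → A → ℝ) (m : ℕ) (x : A) : 0 ≤ diagCutoff κ m x :=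
  Set.indicator_nonneg (fun _ _ => zero_le_one (α := ℝ)) x

lemma diagCutoff_le_one (κ : A → A → ℝ) (m : ℕ) (x : A) : diagCutoff κ m x ≤ 1 :=
  Set.indicator_le_self' (fun _ _ => zero_le_one (α := ℝ)) x

lemma eventually_diagCutoff_eq_one (κ : A → A → ℝ) (x : A) :
    ∀ᶠ m in atTop, diagCutoff κ m x = 1 := by
  filter_upwards [eventually_ge_atTop ⌈|κ x x|⌉₊] with m hm
  exact Set.indicator_of_mem (M := ℝ) (Nat.ceil_le.1 hm) 1

lemma IsPosSemidefKernel.diagTruncation_isPosSemidefKernel {κ : A → A → ℝ}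
    (hκ : IsPosSemidefKernel κ) (m : ℕ) : IsPosSemidefKernel (diagTruncation κ m) :=
  hκ.mul_weight _

lemma diagTruncation_symm {κ : A → A → ℝ} (hsymm : ∀ x y, κ x y = κ y x) (m : ℕ) (x y : A) :
    diagTruncation κ m x y = diagTruncation κ m y x := by
  rw [diagTruncation, diagTruncation, hsymm, mul_comm (diagCutoff κ m x)]

lemma abs_diagTruncation_le (κ : A → A → ℝ) (m : ℕ) (x y : A) :
    |diagTruncation κ m x y| ≤ |κ x y| := by
  rw [diagTruncation, abs_mul,
    abs_of_nonneg (mul_nonneg (diagCutoff_nonneg ..) (diagCutoff_nonneg ..))]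
  exact mul_le_of_le_one_left (abs_nonneg _)
    (mul_le_one₀ (diagCutoff_le_one ..) (diagCutoff_nonneg ..) (diagCutoff_le_one ..))

lemma abs_diagTruncation_self_le (κ : A → A → ℝ) (m : ℕ) (x : A) :
    |diagTruncation κ m x x| ≤ m := by
  by_cases hx : |κ x x| ≤ m <;> simp [diagTruncation, diagCutoff, hx]

lemma eventually_diagTruncation_eq (κ : A → A → ℝ) (x y : A) :
    ∀ᶠ m in atTop, diagTruncation κ m x y = κ x y := by
  filter_upwards [eventually_diagCutoff_eq_one κ x, eventually_diagCutoff_eq_one κ y] with m hx hy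
  rw [diagTruncation, hx, hy, one_mul, one_mul]

variable [MeasurableSpace A]

lemma MeasureTheory.MeasurePreserving.integral_comp_of_aestronglyMeasurable {α β : Type*}
    [MeasurableSpace α] [MeasurableSpace β] {μ : Measure α} {ν : Measure β} {f : α → β}
    (hf : MeasurePreserving f μ ν) {g : β → ℝ} (hg : AEStronglyMeasurable g ν) :
    ∫ x, g (f x) ∂μ = ∫ y, g y ∂ν := by
  rw [← hf.map_eq] at hg ⊢
  exact (integral_map hf.aemeasurable hg).symm

lemma integrable_and_integral_infinitePi_pair {ι : Type*} (ν : ι → Measure A)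
    [∀ i, IsProbabilityMeasure (ν i)] (κ : A → A → ℝ)
    (hprod : ∀ i j, Integrable (uncurry κ) ((ν i).prod (ν j)))
    (hdiag : ∀ i, Integrable (fun x => κ x x) (ν i)) (i j : ι) [Decidable (i = j)] :
    Integrable (fun z : ι → A => κ (z i) (z j)) (Measure.infinitePi ν) ∧
      ∫ z, κ (z i) (z j) ∂Measure.infinitePi ν = ∫ p, uncurry κ p ∂(ν i).prod (ν j) +
        if i = j then ∫ x, κ x x ∂ν i - ∫ p, uncurry κ p ∂(ν i).prod (ν i) else 0 := by
  rcases eq_or_ne i j with rfl | hij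
  · have hev := measurePreserving_eval_infinitePi ν i
    have hf := (hdiag i).aestronglyMeasurable
    rw [if_pos rfl, add_sub_cancel]
    exact ⟨(hev.integrable_comp hf).2 (hdiag i), hev.integral_comp_of_aestronglyMeasurable hf⟩
  · have hpair : MeasurePreserving (fun z : ι → A => (z i, z j)) (Measure.infinitePi ν)
        ((ν i).prod (ν j)) := ⟨by fun_prop, Measure.infinitePi_map_eval_prod hij⟩
    have hf := (hprod i j).aestronglyMeasurable
    rw [if_neg hij, add_zero]
    exact ⟨(hpair.integrable_comp hf).2 (hprod i j),
      hpair.integral_comp_of_aestronglyMeasurable hf⟩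

lemma IsPosSemidefKernel.gram_integral_nonneg {κ : A → A → ℝ} (hκ : IsPosSemidefKernel κ)
    {ι : Type*} [Fintype ι] (ν : ι → Measure A) [∀ i, IsProbabilityMeasure (ν i)] (c : ι → ℝ)
    (hprod : ∀ i j, Integrable (uncurry κ) ((ν i).prod (ν j)))
    (hdiag : ∀ i, Integrable (fun x => κ x x) (ν i)) :
    0 ≤ ∑ i, ∑ j, c i * c j * ∫ p, uncurry κ p ∂(ν i).prod (ν j) +
      ∑ i, c i ^ 2 * (∫ x, κ x x ∂ν i - ∫ p, uncurry κ p ∂(ν i).prod (ν i)) := by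
  classical
  have hpair := integrable_and_integral_infinitePi_pair ν κ hprod hdiag
  calc 0 ≤ ∫ z, ∑ i, ∑ j, c i * c j * κ (z i) (z j) ∂Measure.infinitePi ν :=
        integral_nonneg fun z => hκ.sum_nonneg z c
    _ = ∑ i, ∑ j, c i * c j * ∫ z, κ (z i) (z j) ∂Measure.infinitePi ν := by
        rw [integral_finsetSum _ fun i _ =>
          integrable_finsetSum _ fun j _ => ((hpair i j).1.const_mul _)]
        refine Finset.sum_congr rfl fun i _ => ?_
        rw [integral_finsetSum _ fun j _ => (hpair i j).1.const_mul _]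
        exact Finset.sum_congr rfl fun j _ => integral_const_mul _ _
    _ = _ := by
        simp only [(hpair _ _).2, mul_add, mul_ite, mul_zero, Finset.sum_add_distrib,
          Finset.sum_ite_eq, Finset.mem_univ, if_true, sq]

/-- `∫∫ κ d(ρ - σ) d(ρ - σ)` for symmetric `κ`, written without signed measures. -/
noncomputable def diffEnergy (κ : A → A → ℝ) (ρ σ : Measure A) : ℝ :=
  ∫ p, uncurry κ p ∂ρ.prod ρ + ∫ p, uncurry κ p ∂σ.prod σ - 2 * ∫ p, uncurry κ p ∂ρ.prod σ

lemma IsPosSemidefKernel.diffEnergy_nonneg_of_integrable_diag {κ : A → A → ℝ}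
    (hκ : IsPosSemidefKernel κ) (hsymm : ∀ x y, κ x y = κ y x)
    (ρ σ : Measure A) [IsProbabilityMeasure ρ] [IsProbabilityMeasure σ]
    (hρρ : Integrable (uncurry κ) (ρ.prod ρ)) (hσσ : Integrable (uncurry κ) (σ.prod σ))
    (hρσ : Integrable (uncurry κ) (ρ.prod σ))
    (hρ : Integrable (fun x => κ x x) ρ) (hσ : Integrable (fun x => κ x x) σ) :
    0 ≤ diffEnergy κ ρ σ := by
  have hσρ : Integrable (uncurry κ) (σ.prod ρ) := by
    simpa only [uncurry_comp_swap_of_symm hsymm] using hρσ.swap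
  have hBσρ : ∫ p, uncurry κ p ∂σ.prod ρ = ∫ p, uncurry κ p ∂ρ.prod σ := by
    rw [← integral_prod_swap]
    exact congrArg (integral _) (uncurry_comp_swap_of_symm hsymm)
  refine nonneg_of_forall_sq_mul_add_mul_nonneg (b := ∫ x, κ x x ∂ρ - ∫ p, uncurry κ p ∂ρ.prod ρ
    + (∫ x, κ x x ∂σ - ∫ p, uncurry κ p ∂σ.prod σ)) fun n => ?_
  let ν : Fin n ⊕ Fin n → Measure A := Sum.elim (fun _ => ρ) (fun _ => σ)
  have : ∀ i, IsProbabilityMeasure (ν i) := by rintro (_ | _) <;> assumption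
  have key := hκ.gram_integral_nonneg ν (Sum.elim 1 (-1))
    (by rintro (_ | _) (_ | _) <;> assumption) (by rintro (_ | _) <;> assumption)
  simp only [Fintype.sum_sum_type, Sum.elim_inl, Pi.one_apply, mul_one, Finset.sum_const,
    Finset.card_univ, Fintype.card_fin, nsmul_eq_mul, Sum.elim_inr, Pi.neg_apply, mul_neg, neg_mul,
    one_mul, smul_add, smul_neg, hBσρ, neg_neg, one_pow, even_two, Even.neg_pow, ν] at key
  unfold diffEnergy
  linear_combination key

lemma measurable_diagCutoff {κ : A → A → ℝ} (hdiag : Measurable fun x => κ x x) (m : ℕ) :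
    Measurable (diagCutoff κ m) :=
  measurable_const.indicator (measurableSet_le hdiag.abs measurable_const)

lemma MeasureTheory.Integrable.diagTruncation {κ : A → A → ℝ} (hdiag : Measurable fun x => κ x x)
    {μ : Measure (A × A)} (hκ : Integrable (uncurry κ) μ) (m : ℕ) :
    Integrable (uncurry (diagTruncation κ m)) μ := by
  have hu := measurable_diagCutoff hdiag m
  refine hκ.mono (((hu.comp measurable_fst).mul (hu.comp measurable_snd)).aestronglyMeasurable.mul
    hκ.aestronglyMeasurable) (ae_of_all _ fun p => ?_)
  rw [Real.norm_eq_abs, Real.norm_eq_abs]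
  exact abs_diagTruncation_le κ m p.1 p.2

lemma integrable_diagTruncation_self {κ : A → A → ℝ} (hdiag : Measurable fun x => κ x x)
    (μ : Measure A) [IsFiniteMeasure μ] (m : ℕ) :
    Integrable (fun x => diagTruncation κ m x x) μ := by
  have hu := measurable_diagCutoff hdiag m
  exact .of_bound ((hu.mul hu).mul hdiag).aestronglyMeasurable m
    (ae_of_all _ fun x => abs_diagTruncation_self_le κ m x)

lemma tendsto_integral_diagTruncation {κ : A → A → ℝ} (hdiag : Measurable fun x => κ x x)
    {μ : Measure (A × A)} (hκ : Integrable (uncurry κ) μ) :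
    Tendsto (fun m => ∫ p, uncurry (diagTruncation κ m) p ∂μ) atTop (𝓝 (∫ p, uncurry κ p ∂μ)) :=
  tendsto_integral_of_dominated_convergence (fun p => |κ p.1 p.2|)
    (fun m => (hκ.diagTruncation hdiag m).aestronglyMeasurable) hκ.abs
    (fun m => ae_of_all _ fun p => abs_diagTruncation_le κ m p.1 p.2)
    (ae_of_all _ fun p =>
      tendsto_const_nhds.congr' (EventuallyEq.symm (eventually_diagTruncation_eq κ p.1 p.2)))

lemma IsPosSemidefKernel.diffEnergy_nonneg {κ : A → A → ℝ} (hκ : IsPosSemidefKernel κ)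
    (hsymm : ∀ x y, κ x y = κ y x) (hdiag : Measurable fun x => κ x x)
    (ρ σ : Measure A) [IsProbabilityMeasure ρ] [IsProbabilityMeasure σ]
    (hρρ : Integrable (uncurry κ) (ρ.prod ρ)) (hσσ : Integrable (uncurry κ) (σ.prod σ))
    (hρσ : Integrable (uncurry κ) (ρ.prod σ)) :
    0 ≤ diffEnergy κ ρ σ := by
  have hlim : Tendsto (fun m => diffEnergy (diagTruncation κ m) ρ σ) atTop
      (𝓝 (diffEnergy κ ρ σ)) :=
    ((tendsto_integral_diagTruncation hdiag hρρ).add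
      (tendsto_integral_diagTruncation hdiag hσσ)).sub
      ((tendsto_integral_diagTruncation hdiag hρσ).const_mul 2)
  refine ge_of_tendsto' hlim fun m => ?_
  exact (hκ.diagTruncation_isPosSemidefKernel m).diffEnergy_nonneg_of_integrable_diag
    (diagTruncation_symm hsymm m) ρ σ (hρρ.diagTruncation hdiag m)
    (hσσ.diagTruncation hdiag m) (hρσ.diagTruncation hdiag m)
    (integrable_diagTruncation_self hdiag ρ m) (integrable_diagTruncation_self hdiag σ m)

lemma integrable_centeredKernel {γ : A → A → ℝ} {o : A} {μ ν : Measure A}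
    [IsFiniteMeasure μ] [IsFiniteMeasure ν]
    (hμ : Integrable (fun x => γ x o) μ) (hν : Integrable (fun x => γ x o) ν)
    (h : Integrable (uncurry γ) (μ.prod ν)) :
    Integrable (uncurry (centeredKernel γ o)) (μ.prod ν) :=
  (((hμ.comp_fst ν).add (hν.comp_snd μ)).sub h).sub (integrable_const _)

lemma integral_centeredKernel {γ : A → A → ℝ} {o : A} {μ ν : Measure A}
    [IsProbabilityMeasure μ] [IsProbabilityMeasure ν]
    (hμ : Integrable (fun x => γ x o) μ) (hν : Integrable (fun x => γ x o) ν)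
    (h : Integrable (uncurry γ) (μ.prod ν)) :
    ∫ p, uncurry (centeredKernel γ o) p ∂μ.prod ν =
      ∫ x, γ x o ∂μ + ∫ x, γ x o ∂ν - ∫ p, uncurry γ p ∂μ.prod ν - γ o o := by
  have h₁ := hμ.comp_fst ν
  have h₂ := hν.comp_snd μ
  change ∫ p, (γ p.1 o + γ p.2 o - uncurry γ p - γ o o) ∂μ.prod ν = _
  rw [integral_sub (by exact (h₁.add h₂).sub h) (integrable_const _),
    integral_sub (by exact h₁.add h₂) h, integral_add h₁ h₂, integral_fun_fst (fun x => γ x o),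
    integral_fun_snd (fun x => γ x o), integral_const]
  simp

lemma diffEnergy_centeredKernel {γ : A → A → ℝ} {o : A} {ρ σ : Measure A}
    [IsProbabilityMeasure ρ] [IsProbabilityMeasure σ]
    (hρ : Integrable (fun x => γ x o) ρ) (hσ : Integrable (fun x => γ x o) σ)
    (hρρ : Integrable (uncurry γ) (ρ.prod ρ)) (hσσ : Integrable (uncurry γ) (σ.prod σ))
    (hρσ : Integrable (uncurry γ) (ρ.prod σ)) :
    diffEnergy (centeredKernel γ o) ρ σ = -diffEnergy γ ρ σ := by
  rw [diffEnergy, diffEnergy, integral_centeredKernel hρ hρ hρρ,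
    integral_centeredKernel hσ hσ hσσ, integral_centeredKernel hρ hσ hρσ]
  ring

lemma IsNegativeTypeKernel.diffEnergy_nonpos {γ : A → A → ℝ} (hγ : IsNegativeTypeKernel γ)
    (hsymm : ∀ x y, γ x y = γ y x) (hmeas : ∀ y, Measurable fun x => γ x y)
    (hdiag : Measurable fun x => γ x x)
    (ρ σ : Measure A) [IsProbabilityMeasure ρ] [IsProbabilityMeasure σ]
    (hρρ : Integrable (uncurry γ) (ρ.prod ρ)) (hσσ : Integrable (uncurry γ) (σ.prod σ))
    (hρσ : Integrable (uncurry γ) (ρ.prod σ)) :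
    diffEnergy γ ρ σ ≤ 0 := by
  obtain ⟨o, hρ, hσ⟩ : ∃ o, Integrable (fun x => γ x o) ρ ∧ Integrable (fun x => γ x o) σ :=
    (hρσ.prod_left_ae.and hσσ.prod_left_ae).exists
  have hk := (hγ.isPosSemidefKernel_centeredKernel hsymm o).diffEnergy_nonneg
    (centeredKernel_symm hsymm o) ((((hmeas o).add (hmeas o)).sub hdiag).sub measurable_const) ρ σ
    (integrable_centeredKernel hρ hρ hρρ) (integrable_centeredKernel hσ hσ hσσ)
    (integrable_centeredKernel hρ hσ hρσ)
  rw [diffEnergy_centeredKernel hρ hσ hρρ hσσ hρσ] at hk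
  linarith

lemma MeasureTheory.Integrable.prod_cond {f : A → A → ℝ} {μ ν : Measure A} [SFinite ν]
    {s t : Set A} (hf : Integrable (uncurry f) ((μ.restrict s).prod (ν.restrict t)))
    (hs : μ s ≠ 0) (ht : ν t ≠ 0) :
    Integrable (uncurry f) ((μ[|s]).prod (ν[|t])) := by
  rw [ProbabilityTheory.cond, ProbabilityTheory.cond, Measure.prod_smul_left,
    Measure.prod_smul_right]
  exact (hf.smul_measure (ENNReal.inv_ne_top.2 ht)).smul_measure (ENNReal.inv_ne_top.2 hs)

lemma integral_prod_cond {f : A → A → ℝ} {μ ν : Measure A} {s t : Set A} [SFinite μ] [SFinite ν]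
    (hf : Integrable (uncurry f) ((μ.restrict s).prod (ν.restrict t))) :
    ∫ p, uncurry f p ∂(μ[|s]).prod (ν[|t]) =
      ((μ s).toReal * (ν t).toReal)⁻¹ * ∫ x in s, ∫ y in t, f x y ∂ν ∂μ := by
  rw [ProbabilityTheory.cond, ProbabilityTheory.cond, Measure.prod_smul_left,
    Measure.prod_smul_right, integral_smul_measure, integral_smul_measure, integral_prod _ hf]
  simp only [smul_eq_mul, ENNReal.toReal_inv, mul_inv, mul_assoc, uncurry_apply_pair]

end

theorem normalized_energy_nonneg_general
    {A : Type*} [MetricSpace A] [MeasurableSpace A] [BorelSpace A]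
    (γ : A → A → ℝ)
    (hcont : Continuous fun p : A × A => γ p.1 p.2)
    (hsymm : ∀ x y, γ x y = γ y x)
    (hneg : ∀ (n : ℕ) (x : Fin n → A) (c : Fin n → ℝ), (∑ i, c i) = 0 →
      (∑ i, ∑ j, c i * c j * γ (x i) (x j)) ≤ 0)
    (S : Set A)
    (P Q : Measure A) [IsProbabilityMeasure P] [IsProbabilityMeasure Q]
    (hPS : 0 < (P S).toReal) (hQS : 0 < (Q S).toReal)
    (hPQ : Integrable (fun p : A × A => γ p.1 p.2) ((P.restrict S).prod (Q.restrict S)))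
    (hPP : Integrable (fun p : A × A => γ p.1 p.2) ((P.restrict S).prod (P.restrict S)))
    (hQQ : Integrable (fun p : A × A => γ p.1 p.2) ((Q.restrict S).prod (Q.restrict S))) :
    0 ≤ 2 * ((∫ x in S, ∫ y in S, γ x y ∂Q ∂P) / ((P S).toReal * (Q S).toReal))
        - ((∫ x in S, ∫ y in S, γ x y ∂P ∂P) / ((P S).toReal) ^ 2)
        - ((∫ x in S, ∫ y in S, γ x y ∂Q ∂Q) / ((Q S).toReal) ^ 2) := by
  have hP : P S ≠ 0 := (ENNReal.toReal_pos_iff.1 hPS).1.ne'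
  have hQ : Q S ≠ 0 := (ENNReal.toReal_pos_iff.1 hQS).1.ne'
  have := cond_isProbabilityMeasure (μ := P) hP
  have := cond_isProbabilityMeasure (μ := Q) hQ
  have hE := IsNegativeTypeKernel.diffEnergy_nonpos hneg hsymm
    (fun y => (hcont.comp (continuous_id.prodMk continuous_const)).measurable)
    (hcont.comp (continuous_id.prodMk continuous_id)).measurable (P[|S]) (Q[|S])
    (hPP.prod_cond hP hP) (hQQ.prod_cond hQ hQ) (hPQ.prod_cond hP hQ)
  rw [diffEnergy, integral_prod_cond hPP, integral_prod_cond hQQ, integral_prod_cond hPQ] at hE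
  simp only [div_eq_inv_mul, sq]
  linarith

/-- For a continuous symmetric function γ of negative type on a metric space A, a measurable
set S and probability measures P, Q charging S, the normalized (conditional) energy expression
is nonnegative. -/
theorem normalized_energy_nonneg
    {A : Type*} [MetricSpace A] [MeasurableSpace A] [BorelSpace A]
    (γ : A → A → ℝ)
    (hcont : Continuous fun p : A × A => γ p.1 p.2)
    (hsymm : ∀ x y, γ x y = γ y x)
    (hneg : ∀ (n : ℕ) (x : Fin n → A) (c : Fin n → ℝ), (∑ i, c i) = 0 →
      (∑ i, ∑ j, c i * c j * γ (x i) (x j)) ≤ 0)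
    (S : Set A) (hS : MeasurableSet S)
    (P Q : Measure A) [IsProbabilityMeasure P] [IsProbabilityMeasure Q]
    (hPS : 0 < (P S).toReal) (hQS : 0 < (Q S).toReal)
    (hPQ : Integrable (fun p : A × A => γ p.1 p.2) ((P.restrict S).prod (Q.restrict S)))
    (hPP : Integrable (fun p : A × A => γ p.1 p.2) ((P.restrict S).prod (P.restrict S)))
    (hQQ : Integrable (fun p : A × A => γ p.1 p.2) ((Q.restrict S).prod (Q.restrict S))) :
    0 ≤ 2 * ((∫ x in S, ∫ y in S, γ x y ∂Q ∂P) / ((P S).toReal * (Q S).toReal))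
        - ((∫ x in S, ∫ y in S, γ x y ∂P ∂P) / ((P S).toReal) ^ 2)
        - ((∫ x in S, ∫ y in S, γ x y ∂Q ∂Q) / ((Q S).toReal) ^ 2) :=
  normalized_energy_nonneg_general γ hcont hsymm hneg S P Q hPS hQS hPQ hPP hQQ
end

section
/- In the setting of the previous statement, if γ is strictly negative-definite, then the normalized energy expression equals zero if and only if the conditional (normalized) restrictions of P and Q to S coincide, i.e., P(B)/P(S) = Q(B)/Q(S) for every measurable B ⊆ S. -/
open MeasureTheory

lemma smul_prod_smul_aux {α : Type*} [MeasurableSpace α] (μ ν : Measure α)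
    [IsFiniteMeasure μ] [IsFiniteMeasure ν] {c d : ENNReal} (hc : c ≠ ⊤) (hd : d ≠ ⊤) :
    ((c • μ).prod (d • ν)) = (c * d) • (μ.prod ν) := by
  haveI : IsFiniteMeasure (c • μ) :=
    ⟨by simp [Measure.smul_apply, lt_top_iff_ne_top, ENNReal.mul_ne_top, hc, measure_ne_top]⟩
  haveI : IsFiniteMeasure (d • ν) :=
    ⟨by simp [Measure.smul_apply, lt_top_iff_ne_top, ENNReal.mul_ne_top, hd, measure_ne_top]⟩
  refine Measure.prod_eq fun s t hs ht => ?_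
  simp only [Measure.smul_apply, Measure.prod_prod, smul_eq_mul]
  ring

lemma integral_integral_smul_smul {α : Type*} [MeasurableSpace α] (γ : α → α → ℝ)
    (ρ σ : Measure α) (c d : ENNReal) :
    ∫ x, ∫ y, γ x y ∂(d • σ) ∂(c • ρ)
      = c.toReal * d.toReal * ∫ x, ∫ y, γ x y ∂σ ∂ρ := by
  rw [integral_smul_measure]
  simp_rw [integral_smul_measure]
  rw [integral_smul]
  simp [smul_eq_mul]; ring

/-- If γ is strictly of negative type (the generalized energy distance between probability
measures with finite γ-moments vanishes only for equal measures), then the normalized energy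
expression over S is zero iff the conditional restrictions of P and Q to S coincide. -/
theorem normalized_energy_eq_zero_iff_conditional_eq
    {A : Type*} [MetricSpace A] [MeasurableSpace A] [BorelSpace A]
    (γ : A → A → ℝ)
    (hcont : Continuous fun p : A × A => γ p.1 p.2)
    (hsymm : ∀ x y, γ x y = γ y x)
    (hstrict : ∀ (μ ν : Measure A), IsProbabilityMeasure μ → IsProbabilityMeasure ν →
      Integrable (fun p : A × A => γ p.1 p.2) (μ.prod ν) →
      Integrable (fun p : A × A => γ p.1 p.2) (μ.prod μ) →
      Integrable (fun p : A × A => γ p.1 p.2) (ν.prod ν) →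
      2 * (∫ x, ∫ y, γ x y ∂ν ∂μ) - (∫ x, ∫ y, γ x y ∂μ ∂μ)
        - (∫ x, ∫ y, γ x y ∂ν ∂ν) = 0 → μ = ν)
    (S : Set A) (hS : MeasurableSet S)
    (P Q : Measure A) [IsProbabilityMeasure P] [IsProbabilityMeasure Q]
    (hPS : 0 < (P S).toReal) (hQS : 0 < (Q S).toReal)
    (hPQ : Integrable (fun p : A × A => γ p.1 p.2) ((P.restrict S).prod (Q.restrict S)))
    (hPP : Integrable (fun p : A × A => γ p.1 p.2) ((P.restrict S).prod (P.restrict S)))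
    (hQQ : Integrable (fun p : A × A => γ p.1 p.2) ((Q.restrict S).prod (Q.restrict S))) :
    (2 * ((∫ x in S, ∫ y in S, γ x y ∂Q ∂P) / ((P S).toReal * (Q S).toReal))
        - ((∫ x in S, ∫ y in S, γ x y ∂P ∂P) / ((P S).toReal) ^ 2)
        - ((∫ x in S, ∫ y in S, γ x y ∂Q ∂Q) / ((Q S).toReal) ^ 2) = 0)
      ↔ ∀ B : Set A, MeasurableSet B → B ⊆ S →
          (P B).toReal / (P S).toReal = (Q B).toReal / (Q S).toReal := by
  have hp0 : P S ≠ 0 := fun h => by simp [h] at hPS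
  have hq0 : Q S ≠ 0 := fun h => by simp [h] at hQS
  have hpt : P S ≠ ⊤ := measure_ne_top _ _
  have hqt : Q S ≠ ⊤ := measure_ne_top _ _
  set cp : ENNReal := (P S)⁻¹ with hcp
  set cq : ENNReal := (Q S)⁻¹ with hcq
  have hcpt : cp ≠ ⊤ := ENNReal.inv_ne_top.2 hp0
  have hcqt : cq ≠ ⊤ := ENNReal.inv_ne_top.2 hq0
  set μ : Measure A := cp • P.restrict S with hμ
  set ν : Measure A := cq • Q.restrict S with hν
  have hμprob : IsProbabilityMeasure μ := ⟨by
    rw [hμ, Measure.smul_apply, Measure.restrict_apply MeasurableSet.univ, Set.univ_inter,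
      smul_eq_mul, ENNReal.inv_mul_cancel hp0 hpt]⟩
  have hνprob : IsProbabilityMeasure ν := ⟨by
    rw [hν, Measure.smul_apply, Measure.restrict_apply MeasurableSet.univ, Set.univ_inter,
      smul_eq_mul, ENNReal.inv_mul_cancel hq0 hqt]⟩
  have hcp_real : cp.toReal = (P S).toReal⁻¹ := by rw [hcp, ENNReal.toReal_inv]
  have hcq_real : cq.toReal = (Q S).toReal⁻¹ := by rw [hcq, ENNReal.toReal_inv]
  have eμν : ∫ x, ∫ y, γ x y ∂ν ∂μ
      = (P S).toReal⁻¹ * (Q S).toReal⁻¹ * ∫ x in S, ∫ y in S, γ x y ∂Q ∂P := by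
    rw [hμ, hν, integral_integral_smul_smul, hcp_real, hcq_real]
  have eμμ : ∫ x, ∫ y, γ x y ∂μ ∂μ
      = (P S).toReal⁻¹ * (P S).toReal⁻¹ * ∫ x in S, ∫ y in S, γ x y ∂P ∂P := by
    rw [hμ, integral_integral_smul_smul, hcp_real]
  have eνν : ∫ x, ∫ y, γ x y ∂ν ∂ν
      = (Q S).toReal⁻¹ * (Q S).toReal⁻¹ * ∫ x in S, ∫ y in S, γ x y ∂Q ∂Q := by
    rw [hν, integral_integral_smul_smul, hcq_real]
  have hPQ' : Integrable (fun p : A × A => γ p.1 p.2) (μ.prod ν) := by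
    rw [hμ, hν, smul_prod_smul_aux _ _ hcpt hcqt]
    exact hPQ.smul_measure (ENNReal.mul_ne_top hcpt hcqt)
  have hPP' : Integrable (fun p : A × A => γ p.1 p.2) (μ.prod μ) := by
    rw [hμ, smul_prod_smul_aux _ _ hcpt hcpt]
    exact hPP.smul_measure (ENNReal.mul_ne_top hcpt hcpt)
  have hQQ' : Integrable (fun p : A × A => γ p.1 p.2) (ν.prod ν) := by
    rw [hν, smul_prod_smul_aux _ _ hcqt hcqt]
    exact hQQ.smul_measure (ENNReal.mul_ne_top hcqt hcqt)
  have hp : (P S).toReal ≠ 0 := ne_of_gt hPS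
  have hq : (Q S).toReal ≠ 0 := ne_of_gt hQS
  constructor
  · intro h0
    have hzero : 2 * (∫ x, ∫ y, γ x y ∂ν ∂μ) - (∫ x, ∫ y, γ x y ∂μ ∂μ)
        - (∫ x, ∫ y, γ x y ∂ν ∂ν) = 0 := by
      rw [eμν, eμμ, eνν]
      field_simp at h0 ⊢
      linarith
    have heq := hstrict μ ν hμprob hνprob hPQ' hPP' hQQ' hzero
    intro B hB hBS
    have hBeq : μ B = ν B := by rw [heq]
    rw [hμ, hν, Measure.smul_apply, Measure.smul_apply, Measure.restrict_apply hB,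
      Measure.restrict_apply hB, Set.inter_eq_self_of_subset_left hBS] at hBeq
    have := congrArg ENNReal.toReal hBeq
    rw [smul_eq_mul, smul_eq_mul, ENNReal.toReal_mul, ENNReal.toReal_mul,
      hcp_real, hcq_real] at this
    rw [div_eq_inv_mul, div_eq_inv_mul]
    exact this
  · intro h
    have hμν : μ = ν := by
      ext B hB
      rw [hμ, hν, Measure.smul_apply, Measure.smul_apply, Measure.restrict_apply hB,
        Measure.restrict_apply hB, smul_eq_mul, smul_eq_mul]
      have hfin1 : cp * P (B ∩ S) ≠ ⊤ := ENNReal.mul_ne_top hcpt (measure_ne_top _ _)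
      have hfin2 : cq * Q (B ∩ S) ≠ ⊤ := ENNReal.mul_ne_top hcqt (measure_ne_top _ _)
      rw [← ENNReal.toReal_eq_toReal_iff' hfin1 hfin2, ENNReal.toReal_mul, ENNReal.toReal_mul,
        hcp_real, hcq_real]
      have := h (B ∩ S) (hB.inter hS) Set.inter_subset_right
      rw [div_eq_inv_mul, div_eq_inv_mul] at this
      exact this
    have a1 := eμν; rw [hμν] at a1
    have a2 := eμμ; rw [hμν] at a2
    have a3 := eνν
    have b1 : (∫ x in S, ∫ y in S, γ x y ∂Q ∂P) / ((P S).toReal * (Q S).toReal)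
        = ∫ x, ∫ y, γ x y ∂ν ∂ν := by rw [a1, div_eq_mul_inv, mul_inv]; ring
    have b2 : (∫ x in S, ∫ y in S, γ x y ∂P ∂P) / ((P S).toReal) ^ 2
        = ∫ x, ∫ y, γ x y ∂ν ∂ν := by rw [a2, div_eq_mul_inv, sq, mul_inv]; ring
    have b3 : (∫ x in S, ∫ y in S, γ x y ∂Q ∂Q) / ((Q S).toReal) ^ 2
        = ∫ x, ∫ y, γ x y ∂ν ∂ν := by rw [a3, div_eq_mul_inv, sq, mul_inv]; ring
    rw [b1, b2, b3]; ring
end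

section
/- Nonnegativity of the weighted V-statistic energy distance: given nonnegative weights w⁰₁,…,w⁰_{n₀} summing to 1 and w¹₁,…,w¹_{n₁} summing to 1, and points x⁰₁,…,x⁰_{n₀}, x¹₁,…,x¹_{n₁} ∈ ℝ, the quantity 2Σᵢⱼ w⁰ᵢw¹ⱼ|x⁰ᵢ−x¹ⱼ| − Σᵢⱼ w⁰ᵢw⁰ⱼ|x⁰ᵢ−x⁰ⱼ| − Σᵢⱼ w¹ᵢw¹ⱼ|x¹ᵢ−x¹ⱼ| is nonnegative. -/
/-!
Writing `|a - b| = ∫ (1[a < t] - 1[b < t])² dt` and using that, for weights `c` of total mass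
zero, `∑ᵢⱼ cᵢ cⱼ (fᵢ - fⱼ)² = -2 (∑ᵢ cᵢ fᵢ)²`, one gets
`∑ᵢⱼ cᵢ cⱼ |zᵢ - zⱼ| = -2 ∫ (∑ᵢ cᵢ 1[zᵢ < t])² dt ≤ 0`. The energy distance is minus this sum
for the signed weights `(w⁰, -w¹)` on the merged sample.
-/

open Finset MeasureTheory Set

lemma sq_indicator_Ioi_sub_indicator_Ioi (a b t : ℝ) :
    ((Ioi a).indicator 1 t - (Ioi b).indicator 1 t : ℝ) ^ 2 = (uIoc a b).indicator 1 t := by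
  classical
  simp only [indicator_apply, Set.mem_Ioi, mem_uIoc, Pi.one_apply]
  split_ifs <;> grind

lemma integral_indicator_one_uIoc (a b : ℝ) :
    ∫ t, (uIoc a b).indicator (1 : ℝ → ℝ) t = |a - b| := by
  rw [integral_indicator_one measurableSet_uIoc, measureReal_def, Real.volume_uIoc,
    ENNReal.toReal_ofReal (abs_nonneg _), abs_sub_comm]

lemma integrable_indicator_one_uIoc (a b : ℝ) :
    Integrable ((uIoc a b).indicator (1 : ℝ → ℝ)) :=
  (integrable_indicator_iff measurableSet_uIoc).2 (integrableOn_const measure_Ioc_lt_top.ne)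

lemma sum_sum_mul_mul_sub_sq_of_sum_eq_zero {ι : Type*} (s : Finset ι) {c : ι → ℝ}
    (hc : ∑ i ∈ s, c i = 0) (f : ι → ℝ) :
    ∑ i ∈ s, ∑ j ∈ s, c i * c j * (f i - f j) ^ 2 = -2 * (∑ i ∈ s, c i * f i) ^ 2 := by
  have expand : ∀ i j, c i * c j * (f i - f j) ^ 2
      = c i * f i ^ 2 * c j + c i * (c j * f j ^ 2) - 2 * (c i * f i) * (c j * f j) := by
    intro i j; ring
  simp only [expand, sum_sub_distrib, sum_add_distrib, ← mul_sum, ← sum_mul, hc]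
  ring

theorem sum_sum_mul_mul_abs_sub_nonpos {ι : Type*} (s : Finset ι) {c : ι → ℝ}
    (hc : ∑ i ∈ s, c i = 0) (z : ι → ℝ) :
    ∑ i ∈ s, ∑ j ∈ s, c i * c j * |z i - z j| ≤ 0 := by
  set J : ι → ℝ → ℝ := fun i => (Ioi (z i)).indicator 1
  have hint : ∀ i j, Integrable fun t => c i * c j * (J i t - J j t) ^ 2 := fun i j => by
    simpa only [J, sq_indicator_Ioi_sub_indicator_Ioi]
      using (integrable_indicator_one_uIoc (z i) (z j)).const_mul (c i * c j)
  calc ∑ i ∈ s, ∑ j ∈ s, c i * c j * |z i - z j|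
      = ∫ t, ∑ i ∈ s, ∑ j ∈ s, c i * c j * (J i t - J j t) ^ 2 := by
        rw [integral_finsetSum _ fun i _ => integrable_finsetSum _ fun j _ => hint i j]
        refine sum_congr rfl fun i _ => ?_
        rw [integral_finsetSum _ fun j _ => hint i j]
        refine sum_congr rfl fun j _ => ?_
        simp only [J, sq_indicator_Ioi_sub_indicator_Ioi, integral_const_mul,
          integral_indicator_one_uIoc]
    _ = ∫ t, -2 * (∑ i ∈ s, c i * J i t) ^ 2 := by
        simp only [sum_sum_mul_mul_sub_sq_of_sum_eq_zero s hc]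
    _ ≤ 0 := integral_nonpos fun t => mul_nonpos_of_nonpos_of_nonneg (by norm_num) (sq_nonneg _)

theorem weighted_vstatistic_energy_nonneg_general
    {n₀ n₁ : ℕ} (w0 : Fin n₀ → ℝ) (w1 : Fin n₁ → ℝ) (x0 : Fin n₀ → ℝ) (x1 : Fin n₁ → ℝ)
    (hs0 : ∑ i, w0 i = 1) (hs1 : ∑ j, w1 j = 1) :
    0 ≤ 2 * (∑ i, ∑ j, w0 i * w1 j * |x0 i - x1 j|)
        - (∑ i, ∑ j, w0 i * w0 j * |x0 i - x0 j|)
        - (∑ i, ∑ j, w1 i * w1 j * |x1 i - x1 j|) := by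
  have hc : ∑ k, Sum.elim w0 (-w1) k = 0 := by
    simp [Fintype.sum_sum_type, hs0, hs1]
  have key := sum_sum_mul_mul_abs_sub_nonpos univ hc (Sum.elim x0 x1)
  have cross :
      ∑ j, ∑ i, w1 j * w0 i * |x1 j - x0 i| = ∑ i, ∑ j, w0 i * w1 j * |x0 i - x1 j| := by
    rw [sum_comm]; simp only [mul_comm (w1 _), abs_sub_comm (x1 _)]
  simp only [Fintype.sum_sum_type, Sum.elim_inl, Sum.elim_inr, Pi.neg_apply, neg_mul, mul_neg,
    sum_neg_distrib, sum_add_distrib, cross] at key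
  linarith

/-- Nonnegativity of the weighted V-statistic energy distance (α = 1, Euclidean distance on ℝ):
for nonnegative weights summing to 1 on each sample and arbitrary real points,
2Σ w⁰ᵢw¹ⱼ|x⁰ᵢ−x¹ⱼ| − Σ w⁰ᵢw⁰ⱼ|x⁰ᵢ−x⁰ⱼ| − Σ w¹ᵢw¹ⱼ|x¹ᵢ−x¹ⱼ| ≥ 0. -/
theorem weighted_vstatistic_energy_nonneg
    {n₀ n₁ : ℕ} (w0 : Fin n₀ → ℝ) (w1 : Fin n₁ → ℝ) (x0 : Fin n₀ → ℝ) (x1 : Fin n₁ → ℝ)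
    (hw0 : ∀ i, 0 ≤ w0 i) (hw1 : ∀ j, 0 ≤ w1 j)
    (hs0 : ∑ i, w0 i = 1) (hs1 : ∑ j, w1 j = 1) :
    0 ≤ 2 * (∑ i, ∑ j, w0 i * w1 j * |x0 i - x1 j|)
        - (∑ i, ∑ j, w0 i * w0 j * |x0 i - x0 j|)
        - (∑ i, ∑ j, w1 i * w1 j * |x1 i - x1 j|) :=
  weighted_vstatistic_energy_nonneg_general w0 w1 x0 x1 hs0 hs1
end

section
/- Zero V-statistic implies equal discrete measures: with weights and points as above and with the Gaussian kernel K(x,y) = exp(−(x−y)²/σ²), the weighted V-statistic MMD Σᵢⱼ w⁰ᵢw⁰ⱼK(x⁰ᵢ,x⁰ⱼ) + Σᵢⱼ w¹ᵢw¹ⱼK(x¹ᵢ,x¹ⱼ) − 2Σᵢⱼ w⁰ᵢw¹ⱼK(x⁰ᵢ,x¹ⱼ) equals 0 if and only if the discrete measures Σᵢ w⁰ᵢ δ_{x⁰ᵢ} and Σⱼ w¹ⱼ δ_{x¹ⱼ} are equal. -/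
open Finset MeasureTheory

/-- mass of a weighted sample at a point -/
noncomputable def massOf {n : ℕ} (w x : Fin n → ℝ) (z : ℝ) : ℝ :=
  ∑ i, if x i = z then w i else 0

lemma massOf_nonneg {n : ℕ} (w x : Fin n → ℝ) (hw : ∀ i, 0 ≤ w i) (z : ℝ) :
    0 ≤ massOf w x z :=
  Finset.sum_nonneg fun i _ => by by_cases h : x i = z <;> simp [h, hw i]

lemma massOf_eq_zero {n : ℕ} (w x : Fin n → ℝ) {T : Finset ℝ} (hT : ∀ i, x i ∈ T)
    {z : ℝ} (hz : z ∉ T) : massOf w x z = 0 :=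
  Finset.sum_eq_zero fun i _ => by
    rw [if_neg]; intro hxz; exact hz (hxz ▸ hT i)

/-- regrouping a weighted sum over the fibers of x -/
lemma regroup {M : Type*} [CommSemiring M] {n : ℕ} (w : Fin n → M) (x : Fin n → ℝ)
    (T : Finset ℝ) (hT : ∀ i, x i ∈ T) (f : ℝ → M) :
    ∑ i, w i * f (x i) = ∑ z ∈ T, (∑ i, if x i = z then w i else 0) * f z := by
  symm
  calc ∑ z ∈ T, (∑ i, if x i = z then w i else 0) * f z
      = ∑ z ∈ T, ∑ i, (if x i = z then w i * f z else 0) := by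
        refine Finset.sum_congr rfl fun z _ => ?_
        rw [Finset.sum_mul]
        exact Finset.sum_congr rfl fun i _ => by rw [ite_mul, zero_mul]
    _ = ∑ i, ∑ z ∈ T, (if x i = z then w i * f z else 0) := Finset.sum_comm
    _ = ∑ i, w i * f (x i) := by
        refine Finset.sum_congr rfl fun i _ => ?_
        rw [Finset.sum_ite_eq T (x i) (fun z => w i * f z), if_pos (hT i)]

lemma regroup_massOf {n : ℕ} (w x : Fin n → ℝ) (T : Finset ℝ) (hT : ∀ i, x i ∈ T)
    (f : ℝ → ℝ) :
    ∑ i, w i * f (x i) = ∑ z ∈ T, massOf w x z * f z :=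
  regroup w x T hT f

/-- vanishing moments implies vanishing coefficients -/
lemma zero_of_moments (T : Finset ℝ) (d : ℝ → ℝ)
    (h : ∀ k : ℕ, ∑ z ∈ T, d z * z ^ k = 0) : ∀ z ∈ T, d z = 0 := by
  intro z₀ hz₀
  set P : Polynomial ℝ := ∏ z ∈ T.erase z₀, (Polynomial.X - Polynomial.C z) with hP
  have hPe : ∀ z : ℝ, P.eval z = ∏ t ∈ T.erase z₀, (z - t) := by
    intro z; simp [hP, Polynomial.eval_prod]
  have hsum : ∑ z ∈ T, d z * P.eval z = 0 := by
    have hstep : ∀ z ∈ T, d z * P.eval z =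
        ∑ k ∈ Finset.range (P.natDegree + 1), P.coeff k * (d z * z ^ k) := by
      intro z _
      rw [Polynomial.eval_eq_sum_range, Finset.mul_sum]
      exact Finset.sum_congr rfl fun k _ => by ring
    rw [Finset.sum_congr rfl hstep, Finset.sum_comm]
    refine Finset.sum_eq_zero fun k _ => ?_
    rw [← Finset.mul_sum, h k, mul_zero]
  have hz : ∑ z ∈ T, d z * P.eval z = d z₀ * P.eval z₀ := by
    refine Finset.sum_eq_single_of_mem z₀ hz₀ fun z hzT hne => ?_
    have hev : P.eval z = 0 := by
      rw [hPe]
      exact Finset.prod_eq_zero (Finset.mem_erase.2 ⟨hne, hzT⟩) (sub_self z)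
    rw [hev, mul_zero]
  have hP0 : P.eval z₀ ≠ 0 := by
    rw [hPe]
    refine Finset.prod_ne_zero_iff.2 fun t ht => ?_
    have hne := (Finset.mem_erase.1 ht).1
    intro h0
    exact hne (by linarith [sub_eq_zero.1 h0])
  have := hz ▸ hsum
  exact (mul_eq_zero.1 this).resolve_right hP0

/-- strict positive definiteness of the Gaussian kernel on finite point sets -/
lemma gaussian_sum_zero (c : ℝ) (hc : 0 < c) (T : Finset ℝ) (d : ℝ → ℝ)
    (h : ∑ z ∈ T, ∑ z' ∈ T, d z * d z' * Real.exp (-(z - z') ^ 2 / c) = 0) :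
    ∀ z ∈ T, d z = 0 := by
  set e : ℝ → ℝ := fun z => d z * Real.exp (-z ^ 2 / c) with he
  set S : ℕ → ℝ := fun k => ∑ z ∈ T, e z * z ^ k with hS
  have hexp : ∀ x : ℝ, Real.exp x = ∑' n : ℕ, x ^ n / n.factorial := by
    intro x
    rw [Real.exp_eq_exp_ℝ, NormedSpace.exp_eq_tsum_div]
  have key : ∀ z z' : ℝ, d z * d z' * Real.exp (-(z - z') ^ 2 / c)
      = ∑' n : ℕ, e z * e z' * ((2 * z * z' / c) ^ n / n.factorial) := by
    intro z z'
    have h1 : Real.exp (-(z - z') ^ 2 / c)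
        = Real.exp (-z ^ 2 / c) * Real.exp (-z' ^ 2 / c) * Real.exp (2 * z * z' / c) := by
      rw [← Real.exp_add, ← Real.exp_add]
      congr 1
      field_simp
      ring
    have h3 : d z * d z' * (Real.exp (-z ^ 2 / c) * Real.exp (-z' ^ 2 / c) *
          (∑' n : ℕ, (2 * z * z' / c) ^ n / n.factorial))
        = (e z * e z') * ∑' n : ℕ, (2 * z * z' / c) ^ n / n.factorial := by
      simp only [he]; ring
    rw [h1, hexp (2 * z * z' / c), h3, ← tsum_mul_left]
  have hsummable : ∀ p : ℝ × ℝ,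
      Summable (fun n : ℕ => e p.1 * e p.2 * ((2 * p.1 * p.2 / c) ^ n / n.factorial)) :=
    fun p => (Real.summable_pow_div_factorial _).mul_left _
  have htot : ∑' n : ℕ, ∑ p ∈ T ×ˢ T,
      e p.1 * e p.2 * ((2 * p.1 * p.2 / c) ^ n / n.factorial) = 0 := by
    rw [Summable.tsum_finsetSum (fun p _ => hsummable p), Finset.sum_product, ← h]
    exact Finset.sum_congr rfl fun z _ => Finset.sum_congr rfl fun z' _ => (key z z').symm
  have hterm : ∀ n : ℕ, ∑ p ∈ T ×ˢ T, e p.1 * e p.2 * ((2 * p.1 * p.2 / c) ^ n / n.factorial)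
      = (2 / c) ^ n / n.factorial * (S n * S n) := by
    intro n
    rw [Finset.sum_product]
    have hfac : ∀ z z' : ℝ, e z * e z' * ((2 * z * z' / c) ^ n / n.factorial)
        = ((2 / c) ^ n / n.factorial) * ((e z * z ^ n) * (e z' * z' ^ n)) := by
      intro z z'
      have hp : (2 * z * z' / c) ^ n = (2 / c) ^ n * z ^ n * z' ^ n := by
        rw [← mul_pow, ← mul_pow]
        congr 1
        ring
      rw [hp]
      ring
    simp only [hfac]
    rw [hS, Finset.sum_mul_sum]
    rw [Finset.mul_sum]
    exact Finset.sum_congr rfl fun z _ => by rw [Finset.mul_sum]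
  have hsumS : Summable (fun n : ℕ => ∑ p ∈ T ×ˢ T,
      e p.1 * e p.2 * ((2 * p.1 * p.2 / c) ^ n / n.factorial)) :=
    summable_sum (fun p _ => hsummable p)
  have hSn : ∀ n : ℕ, S n = 0 := by
    intro n
    have hnn : ∀ m : ℕ, (0:ℝ) ≤ (2 / c) ^ m / m.factorial * (S m * S m) := by
      intro m
      have h1 : (0:ℝ) ≤ (2 / c) ^ m / m.factorial := by positivity
      exact mul_nonneg h1 (mul_self_nonneg _)
    have hle := Summable.le_tsum hsumS n (fun m _ => (hterm m) ▸ hnn m)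
    rw [htot, hterm n] at hle
    have h0 : (2 / c) ^ n / n.factorial * (S n * S n) = 0 :=
      le_antisymm hle (hnn n)
    have hpos : (0:ℝ) < (2 / c) ^ n / n.factorial := by positivity
    rcases mul_eq_zero.1 h0 with h' | h'
    · exact absurd h' (ne_of_gt hpos)
    · exact mul_self_eq_zero.1 h'
  intro z hz
  have hez := zero_of_moments T e (fun k => hSn k) z hz
  have hne : Real.exp (-z ^ 2 / c) ≠ 0 := (Real.exp_pos _).ne'
  have : d z * Real.exp (-z ^ 2 / c) = 0 := hez
  exact (mul_eq_zero.1 this).resolve_right hne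
set_option maxHeartbeats 1000000 in
/-- Zero V-statistic implies equal discrete measures: with the Gaussian kernel
K(x,y) = exp(−(x−y)²/σ²), the weighted V-statistic MMD of two weighted samples vanishes iff
the associated discrete probability measures Σᵢ w⁰ᵢ δ_{x⁰ᵢ} and Σⱼ w¹ⱼ δ_{x¹ⱼ} are equal. -/
theorem gaussian_vstatistic_mmd_eq_zero_iff
    {n₀ n₁ : ℕ} (σ : ℝ) (hσ : 0 < σ)
    (w0 : Fin n₀ → ℝ) (w1 : Fin n₁ → ℝ) (x0 : Fin n₀ → ℝ) (x1 : Fin n₁ → ℝ)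
    (hw0 : ∀ i, 0 ≤ w0 i) (hw1 : ∀ j, 0 ≤ w1 j)
    (hs0 : ∑ i, w0 i = 1) (hs1 : ∑ j, w1 j = 1)
    (K : ℝ → ℝ → ℝ) (hK : ∀ x y, K x y = Real.exp (-(x - y) ^ 2 / σ ^ 2)) :
    ((∑ i, ∑ j, w0 i * w0 j * K (x0 i) (x0 j))
        + (∑ i, ∑ j, w1 i * w1 j * K (x1 i) (x1 j))
        - 2 * (∑ i, ∑ j, w0 i * w1 j * K (x0 i) (x1 j)) = 0)
      ↔ (∑ i, ENNReal.ofReal (w0 i) • Measure.dirac (x0 i))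
          = (∑ j, ENNReal.ofReal (w1 j) • Measure.dirac (x1 j)) := by
  classical
  set T : Finset ℝ := (Finset.univ.image x0) ∪ (Finset.univ.image x1) with hT
  have hx0T : ∀ i, x0 i ∈ T := fun i =>
    Finset.mem_union_left _ (Finset.mem_image_of_mem _ (Finset.mem_univ i))
  have hx1T : ∀ j, x1 j ∈ T := fun j =>
    Finset.mem_union_right _ (Finset.mem_image_of_mem _ (Finset.mem_univ j))
  -- rewrite each quadratic form over T
  have hE : ∀ {n n' : ℕ} (w : Fin n → ℝ) (w' : Fin n' → ℝ) (x : Fin n → ℝ) (x' : Fin n' → ℝ),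
      (∀ i, x i ∈ T) → (∀ j, x' j ∈ T) →
      ∑ i, ∑ j, w i * w' j * K (x i) (x' j)
        = ∑ z ∈ T, ∑ z' ∈ T, massOf w x z * massOf w' x' z' * K z z' := by
    intro n n' w w' x x' hx hx'
    calc ∑ i, ∑ j, w i * w' j * K (x i) (x' j)
        = ∑ i, w i * (∑ z' ∈ T, massOf w' x' z' * K (x i) z') := by
          refine Finset.sum_congr rfl fun i _ => ?_
          rw [← regroup_massOf w' x' T hx' (fun z' => K (x i) z'), Finset.mul_sum]
          exact Finset.sum_congr rfl fun j _ => by ring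
      _ = ∑ z ∈ T, massOf w x z * (∑ z' ∈ T, massOf w' x' z' * K z z') :=
          regroup_massOf w x T hx (fun z => ∑ z' ∈ T, massOf w' x' z' * K z z')
      _ = ∑ z ∈ T, ∑ z' ∈ T, massOf w x z * massOf w' x' z' * K z z' := by
          refine Finset.sum_congr rfl fun z _ => ?_
          rw [Finset.mul_sum]
          exact Finset.sum_congr rfl fun z' _ => by ring
  have hKsymm : ∀ z z' : ℝ, K z z' = K z' z := by
    intro z z'
    rw [hK, hK]
    ring_nf
  have hswap : ∑ z ∈ T, ∑ z' ∈ T, massOf w1 x1 z * massOf w0 x0 z' * K z z'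
      = ∑ z ∈ T, ∑ z' ∈ T, massOf w0 x0 z * massOf w1 x1 z' * K z z' := by
    rw [Finset.sum_comm]
    refine Finset.sum_congr rfl fun z _ => Finset.sum_congr rfl fun z' _ => ?_
    rw [hKsymm z' z]
    ring
  have hMMD : (∑ i, ∑ j, w0 i * w0 j * K (x0 i) (x0 j))
        + (∑ i, ∑ j, w1 i * w1 j * K (x1 i) (x1 j))
        - 2 * (∑ i, ∑ j, w0 i * w1 j * K (x0 i) (x1 j))
      = ∑ z ∈ T, ∑ z' ∈ T,
          (massOf w0 x0 z - massOf w1 x1 z) * (massOf w0 x0 z' - massOf w1 x1 z') * K z z' := by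
    rw [hE w0 w0 x0 x0 hx0T hx0T, hE w1 w1 x1 x1 hx1T hx1T, hE w0 w1 x0 x1 hx0T hx1T]
    have expand : ∀ z z' : ℝ, (massOf w0 x0 z - massOf w1 x1 z)
          * (massOf w0 x0 z' - massOf w1 x1 z') * K z z'
        = massOf w0 x0 z * massOf w0 x0 z' * K z z'
          + massOf w1 x1 z * massOf w1 x1 z' * K z z'
          - (massOf w0 x0 z * massOf w1 x1 z' * K z z'
            + massOf w1 x1 z * massOf w0 x0 z' * K z z') := by
      intro z z'
      ring
    simp only [expand, Finset.sum_add_distrib, Finset.sum_sub_distrib]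
    rw [hswap]
    ring
  -- measure characterization
  have hcomp : ∀ {n : ℕ} (w : Fin n → ℝ) (x : Fin n → ℝ), (∀ i, 0 ≤ w i) → ∀ z : ℝ,
      (∑ i, ENNReal.ofReal (w i) • Measure.dirac (x i)) {z}
        = ENNReal.ofReal (massOf w x z) := by
    intro n w x hw z
    rw [Measure.finset_sum_apply, massOf,
      ENNReal.ofReal_sum_of_nonneg (fun i _ => by by_cases h : x i = z <;> simp [h, hw i])]
    refine Finset.sum_congr rfl fun i _ => ?_
    rw [Measure.smul_apply, Measure.dirac_apply' _ (measurableSet_singleton z)]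
    by_cases h : x i = z <;> simp [h, Set.indicator_apply]
  have hcomp2 : ∀ {n : ℕ} (w : Fin n → ℝ) (x : Fin n → ℝ), (∀ i, 0 ≤ w i) → (∀ i, x i ∈ T) →
      ∀ s : Set ℝ, MeasurableSet s →
      (∑ i, ENNReal.ofReal (w i) • Measure.dirac (x i)) s
        = ∑ z ∈ T, ENNReal.ofReal (massOf w x z) * s.indicator 1 z := by
    intro n w x hw hx s hs
    rw [Measure.finset_sum_apply]
    calc ∑ i, (ENNReal.ofReal (w i) • Measure.dirac (x i)) s
        = ∑ i, ENNReal.ofReal (w i) * s.indicator 1 (x i) := by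
          refine Finset.sum_congr rfl fun i _ => ?_
          rw [Measure.smul_apply, Measure.dirac_apply' _ hs, smul_eq_mul]
      _ = ∑ z ∈ T, (∑ i, if x i = z then ENNReal.ofReal (w i) else 0) * s.indicator 1 z :=
          regroup (fun i => ENNReal.ofReal (w i)) x T hx _
      _ = ∑ z ∈ T, ENNReal.ofReal (massOf w x z) * s.indicator 1 z := by
          refine Finset.sum_congr rfl fun z _ => ?_
          congr 1
          rw [massOf, ENNReal.ofReal_sum_of_nonneg
            (fun i _ => by by_cases h : x i = z <;> simp [h, hw i])]
          exact Finset.sum_congr rfl fun i _ => by by_cases h : x i = z <;> simp [h]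
  have hmass : (∑ i, ENNReal.ofReal (w0 i) • Measure.dirac (x0 i))
        = (∑ j, ENNReal.ofReal (w1 j) • Measure.dirac (x1 j))
      ↔ ∀ z : ℝ, massOf w0 x0 z = massOf w1 x1 z := by
    constructor
    · intro h z
      have happ : (∑ i, ENNReal.ofReal (w0 i) • Measure.dirac (x0 i)) {z}
          = (∑ j, ENNReal.ofReal (w1 j) • Measure.dirac (x1 j)) {z} := by rw [h]
      rw [hcomp w0 x0 hw0 z, hcomp w1 x1 hw1 z] at happ
      exact (ENNReal.ofReal_eq_ofReal_iff (massOf_nonneg w0 x0 hw0 z)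
        (massOf_nonneg w1 x1 hw1 z)).1 happ
    · intro h
      refine Measure.ext fun s hs => ?_
      rw [hcomp2 w0 x0 hw0 hx0T s hs, hcomp2 w1 x1 hw1 hx1T s hs]
      exact Finset.sum_congr rfl fun z _ => by rw [h z]
  rw [hmass, hMMD]
  constructor
  · intro h0
    have hMMD2 : ∑ z ∈ T, ∑ z' ∈ T,
        (massOf w0 x0 z - massOf w1 x1 z) * (massOf w0 x0 z' - massOf w1 x1 z')
          * Real.exp (-(z - z') ^ 2 / σ ^ 2) = 0 := by
      rw [← h0]
      exact Finset.sum_congr rfl fun z _ => Finset.sum_congr rfl fun z' _ => by rw [hK]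
    have hd0 := gaussian_sum_zero (σ ^ 2) (by positivity) T
      (fun z => massOf w0 x0 z - massOf w1 x1 z) hMMD2
    intro z
    by_cases hzT : z ∈ T
    · have h1 : massOf w0 x0 z - massOf w1 x1 z = 0 := hd0 z hzT
      linarith
    · rw [massOf_eq_zero w0 x0 hx0T hzT, massOf_eq_zero w1 x1 hx1T hzT]
  · intro h
    refine Finset.sum_eq_zero fun z _ => Finset.sum_eq_zero fun z' _ => ?_
    rw [h z, sub_self, zero_mul, zero_mul]
end

section
/- Energy distance via characteristic functions in one dimension: for probability distributions P₀', P₁' on ℝ with finite first moments and characteristic functions f̂₀, f̂₁, the energy distance with α = 1 satisfies ε₁(P₀',P₁') = (1/π) ∫_{−∞}^{∞} |f̂₀(t) − f̂₁(t)|² / t² dt. -/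
open MeasureTheory

noncomputable def charFunction (P : Measure ℝ) (t : ℝ) : ℂ :=
  ∫ x, Complex.exp (t * x * Complex.I) ∂P

/-!
Everything rests on the kernel identity `∫ (1 - cos (t u)) / t² dt = π |u|`. Integrating it
against `P ⊗ Q` at `u = x - y` and swapping the integrals (legitimate since `E|X - Y| < ∞`) gives
`π E|X - Y| = ∫ (1 - Re (f̂_P(t) conj f̂_Q(t))) / t² dt`, because the double integral of
`cos (t (x - y))` is `Re (f̂_P(t) conj f̂_Q(t))`. The theorem follows by combining the three
instances with `|a - b|² = 2 (1 - Re (a b̄)) - (1 - |a|²) - (1 - |b|²)`.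

The constant `∫ (1 - cos s) / s² ds = π` is computed on `(0, ∞)` by writing
`1 / s² = ∫₀^∞ t e^{-st} dt` and integrating in `s` first, which leaves
`∫₀^∞ dt / (1 + t²) = π / 2`.
-/

open Real Set ProbabilityTheory ComplexConjugate
open scoped Complex

lemma integral_mul_exp_neg_mul_Ioi {s : ℝ} (hs : 0 < s) :
    ∫ t in Ioi (0 : ℝ), t * rexp (-(s * t)) = 1 / s ^ 2 := by
  have h := integral_rpow_mul_exp_neg_mul_Ioi two_pos hs
  rw [show (2 : ℝ) - 1 = 1 by norm_num, Gamma_two, rpow_two] at h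
  simpa [div_pow] using h

lemma integral_one_sub_cos_mul_exp_neg_mul_Ioi {t : ℝ} (ht : 0 < t) :
    ∫ s in Ioi (0 : ℝ), (1 - cos s) * rexp (-(s * t)) = 1 / (t * (1 + t ^ 2)) := by
  have ha : (-(t : ℂ)).re < 0 := by simpa using ht
  have hb : (-(t : ℂ) + Complex.I).re < 0 := by simpa using ht
  have hre : ∀ s : ℝ, (1 - cos s) * rexp (-(s * t))
      = (cexp (-(t : ℂ) * s) - cexp ((-(t : ℂ) + Complex.I) * s)).re := fun s ↦ by
    simp [Complex.exp_re, sub_mul, mul_comm]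
  have hA := integrableOn_exp_mul_complex_Ioi ha 0
  have hB := integrableOn_exp_mul_complex_Ioi hb 0
  have h := integral_re (hA.sub hB)
  simp only [RCLike.re_to_complex, Pi.sub_apply] at h
  simp_rw [hre]
  rw [h, integral_sub hA hB, integral_exp_mul_complex_Ioi ha,
    integral_exp_mul_complex_Ioi hb, Complex.ofReal_zero, mul_zero, mul_zero, Complex.exp_zero,
    Complex.sub_re, Complex.div_re, Complex.div_re]
  simp only [Complex.normSq_apply, Complex.add_re, Complex.add_im, Complex.neg_re, Complex.neg_im,
    Complex.ofReal_re, Complex.ofReal_im, Complex.I_re, Complex.I_im, Complex.one_re,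
    Complex.one_im]
  field_simp
  ring

lemma one_sub_cos_div_sq_nonneg (s t : ℝ) : 0 ≤ (1 - cos s) / t ^ 2 :=
  div_nonneg (sub_nonneg.2 (cos_le_one s)) (sq_nonneg t)

lemma one_sub_cos_div_sq_le (s : ℝ) : (1 - cos s) / s ^ 2 ≤ 4 * (1 + s ^ 2)⁻¹ := by
  rcases eq_or_ne s 0 with rfl | hs
  · norm_num
  have hsmall : 1 - cos s ≤ s ^ 2 / 2 := by linarith [one_sub_sq_div_two_le_cos (x := s)]
  have hlarge : 1 - cos s ≤ 2 := by linarith [neg_one_le_cos s]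
  rw [div_le_iff₀ (by positivity), ← div_eq_mul_inv, div_mul_eq_mul_div,
    le_div_iff₀ (by positivity)]
  nlinarith [mul_le_mul_of_nonneg_left hlarge (sq_nonneg s)]

lemma integrable_one_sub_cos_div_sq : Integrable fun s : ℝ ↦ (1 - cos s) / s ^ 2 := by
  refine (integrable_inv_one_add_sq.const_mul 4).mono'
    (Measurable.aestronglyMeasurable (by fun_prop)) (ae_of_all _ fun s ↦ ?_)
  rw [norm_of_nonneg (one_sub_cos_div_sq_nonneg s s)]
  exact one_sub_cos_div_sq_le s

lemma integral_Ioi_one_sub_cos_div_sq : ∫ s in Ioi (0 : ℝ), (1 - cos s) / s ^ 2 = π / 2 := by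
  set μ := volume.restrict (Ioi (0 : ℝ))
  set F : ℝ → ℝ → ℝ := fun s t ↦ (1 - cos s) * (t * rexp (-(s * t)))
  have hF_nonneg : ∀ s, ∀ t ∈ Ioi (0 : ℝ), 0 ≤ F s t := fun s t ht ↦
    mul_nonneg (sub_nonneg.2 (cos_le_one s)) (mul_nonneg (le_of_lt ht) (exp_nonneg _))
  have hslice : ∀ s ∈ Ioi (0 : ℝ), ∫ t, F s t ∂μ = (1 - cos s) / s ^ 2 := fun s hs ↦ by
    rw [integral_const_mul, integral_mul_exp_neg_mul_Ioi hs, mul_one_div]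
  have hslice_int : ∀ s ∈ Ioi (0 : ℝ), Integrable (F s) μ := fun s (hs : 0 < s) ↦
    (Integrable.of_integral_ne_zero <| by
      rw [integral_mul_exp_neg_mul_Ioi hs]; positivity).const_mul _
  have hF : Integrable (Function.uncurry F) (μ.prod μ) := by
    refine (integrable_prod_iff (by fun_prop)).2 ⟨?_, ?_⟩
    · filter_upwards [ae_restrict_mem measurableSet_Ioi] with s hs using hslice_int s hs
    · refine integrable_one_sub_cos_div_sq.integrableOn.congr_fun_ae ?_
      filter_upwards [ae_restrict_mem measurableSet_Ioi] with s hs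
      rw [← hslice s hs]
      exact integral_congr_ae <| by
        filter_upwards [ae_restrict_mem measurableSet_Ioi] with t ht
        exact (norm_of_nonneg (hF_nonneg s t ht)).symm
  calc ∫ s in Ioi (0 : ℝ), (1 - cos s) / s ^ 2
      = ∫ s, ∫ t, F s t ∂μ ∂μ :=
        setIntegral_congr_fun measurableSet_Ioi fun s hs ↦ (hslice s hs).symm
    _ = ∫ t, ∫ s, F s t ∂μ ∂μ := integral_integral_swap hF
    _ = ∫ t in Ioi (0 : ℝ), (1 + t ^ 2)⁻¹ :=
        setIntegral_congr_fun measurableSet_Ioi fun t (ht : 0 < t) ↦ by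
        simp_rw [F, mul_left_comm _ t, integral_const_mul]
        rw [integral_one_sub_cos_mul_exp_neg_mul_Ioi ht]
        field_simp [ht.ne']
    _ = π / 2 := by simp

lemma integral_one_sub_cos_div_sq : ∫ s, (1 - cos s) / s ^ 2 = π := by
  have h := integral_comp_abs (f := fun s ↦ (1 - cos s) / s ^ 2)
  rw [integral_Ioi_one_sub_cos_div_sq] at h
  simp only [cos_abs, sq_abs] at h
  linarith

lemma one_sub_cos_mul_div_sq_eq {u : ℝ} (hu : u ≠ 0) (t : ℝ) :
    (1 - cos (t * u)) / t ^ 2 = u ^ 2 * ((1 - cos (u * t)) / (u * t) ^ 2) := by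
  rw [mul_comm u t, mul_pow, ← div_div, mul_div_cancel₀ _ (pow_ne_zero 2 hu)]

lemma integrable_one_sub_cos_mul_div_sq (u : ℝ) :
    Integrable fun t : ℝ ↦ (1 - cos (t * u)) / t ^ 2 := by
  rcases eq_or_ne u 0 with rfl | hu
  · simp
  simp_rw [one_sub_cos_mul_div_sq_eq hu]
  exact (integrable_one_sub_cos_div_sq.comp_mul_left' hu).const_mul _

lemma integral_one_sub_cos_mul_div_sq (u : ℝ) :
    ∫ t, (1 - cos (t * u)) / t ^ 2 = π * |u| := by
  rcases eq_or_ne u 0 with rfl | hu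
  · simp
  simp_rw [one_sub_cos_mul_div_sq_eq hu]
  rw [integral_const_mul, Measure.integral_comp_mul_left (fun s ↦ (1 - cos s) / s ^ 2),
    integral_one_sub_cos_div_sq, smul_eq_mul, abs_inv, ← sq_abs]
  field_simp

lemma charFunction_eq_charFun (P : Measure ℝ) : charFunction P = charFun P :=
  funext fun t ↦ (charFun_apply_real t).symm

lemma integrable_exp_mul_I {μ : Measure ℝ} [IsFiniteMeasure μ] (t : ℝ) :
    Integrable (fun x : ℝ ↦ cexp (t * x * Complex.I)) μ :=
  (integrable_const (1 : ℝ)).mono' (by fun_prop) <| ae_of_all _ fun x ↦ by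
    rw [← Complex.ofReal_mul, Complex.norm_exp_ofReal_mul_I]

lemma integral_one_sub_re {α : Type*} [MeasurableSpace α] {μ : Measure α}
    [IsProbabilityMeasure μ] {f : α → ℂ} (hf : Integrable f μ) :
    ∫ x, (1 - (f x).re) ∂μ = 1 - (∫ x, f x ∂μ).re := by
  have hre : ∫ x, (f x).re ∂μ = (∫ x, f x ∂μ).re := integral_re hf
  have hf_re : Integrable (fun x ↦ (f x).re) μ := hf.re
  rw [integral_sub (integrable_const 1) hf_re, integral_const, probReal_univ, one_smul, hre]

lemma cos_mul_sub_eq_re (t x y : ℝ) :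
    cos (t * (x - y)) = (cexp (t * x * Complex.I) * cexp ((-t : ℝ) * y * Complex.I)).re := by
  rw [← Complex.exp_add, ← add_mul, ← Complex.ofReal_mul, ← Complex.ofReal_mul,
    ← Complex.ofReal_add, Complex.exp_ofReal_mul_I_re]
  ring_nf

lemma integral_one_sub_cos_mul_sub {Q : Measure ℝ} [IsProbabilityMeasure Q] (t x : ℝ) :
    ∫ y, (1 - cos (t * (x - y))) ∂Q = 1 - (cexp (t * x * Complex.I) * conj (charFun Q t)).re := by
  simp_rw [cos_mul_sub_eq_re]
  rw [integral_one_sub_re ((integrable_exp_mul_I _).const_mul _), integral_const_mul,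
    ← charFun_apply_real, charFun_neg]

lemma integral_integral_one_sub_cos_mul_sub {P Q : Measure ℝ} [IsProbabilityMeasure P]
    [IsProbabilityMeasure Q] (t : ℝ) :
    ∫ x, ∫ y, (1 - cos (t * (x - y))) ∂Q ∂P = 1 - (charFun P t * conj (charFun Q t)).re := by
  simp_rw [integral_one_sub_cos_mul_sub]
  rw [integral_one_sub_re ((integrable_exp_mul_I t).mul_const _), integral_mul_const,
    ← charFun_apply_real]

lemma norm_sub_sq_eq_one_sub_re_mul_conj (a b : ℂ) :
    ‖a - b‖ ^ 2 = 2 * (1 - (a * conj b).re) - (1 - (a * conj a).re) - (1 - (b * conj b).re) := by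
  rw [← Complex.normSq_eq_norm_sq, Complex.normSq_sub, Complex.mul_conj, Complex.mul_conj]
  simp only [Complex.ofReal_re]
  ring

section FirstMoment

variable {P Q : Measure ℝ}

lemma integrable_abs_sub_prod [IsFiniteMeasure P] [IsFiniteMeasure Q]
    (hP : Integrable (fun x : ℝ ↦ |x|) P) (hQ : Integrable (fun x : ℝ ↦ |x|) Q) :
    Integrable (fun p : ℝ × ℝ ↦ |p.1 - p.2|) (P.prod Q) :=
  ((hP.comp_fst Q).add (hQ.comp_snd P)).mono' (by fun_prop) <| ae_of_all _ fun p ↦ by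
    simpa using abs_sub p.1 p.2

lemma integrable_one_sub_cos_mul_sub_div_sq [IsFiniteMeasure P] [IsFiniteMeasure Q]
    (hP : Integrable (fun x : ℝ ↦ |x|) P) (hQ : Integrable (fun x : ℝ ↦ |x|) Q) :
    Integrable (fun q : ℝ × ℝ × ℝ ↦ (1 - cos (q.1 * (q.2.1 - q.2.2))) / q.1 ^ 2)
      (volume.prod (P.prod Q)) := by
  refine (integrable_prod_iff' (Measurable.aestronglyMeasurable (by fun_prop))).2
    ⟨ae_of_all _ fun p ↦ integrable_one_sub_cos_mul_div_sq (p.1 - p.2), ?_⟩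
  refine ((integrable_abs_sub_prod hP hQ).const_mul π).congr (ae_of_all _ fun p ↦ ?_)
  dsimp only
  rw [← integral_one_sub_cos_mul_div_sq]
  exact integral_congr_ae <| ae_of_all _ fun t ↦
    (norm_of_nonneg (one_sub_cos_div_sq_nonneg _ t)).symm

variable [IsProbabilityMeasure P] [IsProbabilityMeasure Q]

lemma one_sub_re_charFun_mul_conj_div_sq_eq_integral (t : ℝ) :
    (1 - (charFun P t * conj (charFun Q t)).re) / t ^ 2
      = ∫ p : ℝ × ℝ, (1 - cos (t * (p.1 - p.2))) / t ^ 2 ∂(P.prod Q) := by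
  have hint : Integrable (fun p : ℝ × ℝ ↦ 1 - cos (t * (p.1 - p.2))) (P.prod Q) :=
    (integrable_const (2 : ℝ)).mono' (by fun_prop) <| ae_of_all _ fun p ↦ by
      rw [norm_eq_abs, abs_le]
      constructor <;> linarith [cos_le_one (t * (p.1 - p.2)), neg_one_le_cos (t * (p.1 - p.2))]
  rw [integral_div, integral_prod _ hint, integral_integral_one_sub_cos_mul_sub]

lemma integrable_one_sub_re_charFun_mul_conj_div_sq
    (hP : Integrable (fun x : ℝ ↦ |x|) P) (hQ : Integrable (fun x : ℝ ↦ |x|) Q) :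
    Integrable fun t ↦ (1 - (charFun P t * conj (charFun Q t)).re) / t ^ 2 := by
  simp_rw [one_sub_re_charFun_mul_conj_div_sq_eq_integral]
  exact (integrable_one_sub_cos_mul_sub_div_sq hP hQ).integral_prod_left

lemma integral_one_sub_re_charFun_mul_conj_div_sq
    (hP : Integrable (fun x : ℝ ↦ |x|) P) (hQ : Integrable (fun x : ℝ ↦ |x|) Q) :
    ∫ t, (1 - (charFun P t * conj (charFun Q t)).re) / t ^ 2
      = π * ∫ x, ∫ y, |x - y| ∂Q ∂P := by
  simp_rw [one_sub_re_charFun_mul_conj_div_sq_eq_integral]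
  rw [integral_integral_swap (integrable_one_sub_cos_mul_sub_div_sq hP hQ)]
  simp_rw [integral_one_sub_cos_mul_div_sq]
  rw [integral_const_mul, integral_prod _ (integrable_abs_sub_prod hP hQ)]

end FirstMoment

/-- Energy distance via characteristic functions (Székely–Rizzo): for probability distributions
P₀', P₁' on ℝ with finite first moments,
ε₁(P₀',P₁') = 2E|X−Y| − E|X−X'| − E|Y−Y'| = (1/π) ∫ |f̂₀(t) − f̂₁(t)|²/t² dt. -/
theorem energy_distance_eq_charFunction_integral
    (P₀ P₁ : Measure ℝ) [IsProbabilityMeasure P₀] [IsProbabilityMeasure P₁]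
    (h₀ : Integrable (fun x : ℝ => |x|) P₀) (h₁ : Integrable (fun x : ℝ => |x|) P₁) :
    2 * (∫ x, ∫ y, |x - y| ∂P₁ ∂P₀)
      - (∫ x, ∫ x', |x - x'| ∂P₀ ∂P₀)
      - (∫ y, ∫ y', |y - y'| ∂P₁ ∂P₁)
      = (1 / Real.pi) * ∫ t : ℝ, ‖charFunction P₀ t - charFunction P₁ t‖ ^ 2 / t ^ 2 := by
  have hsplit : ∀ t, ‖charFunction P₀ t - charFunction P₁ t‖ ^ 2 / t ^ 2
      = 2 * ((1 - (charFun P₀ t * conj (charFun P₁ t)).re) / t ^ 2)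
        - (1 - (charFun P₀ t * conj (charFun P₀ t)).re) / t ^ 2
        - (1 - (charFun P₁ t * conj (charFun P₁ t)).re) / t ^ 2 := fun t ↦ by
    rw [charFunction_eq_charFun, charFunction_eq_charFun, norm_sub_sq_eq_one_sub_re_mul_conj]
    ring
  have hk₀₁ := integrable_one_sub_re_charFun_mul_conj_div_sq h₀ h₁
  have hk₀₀ := integrable_one_sub_re_charFun_mul_conj_div_sq h₀ h₀
  have hk₁₁ := integrable_one_sub_re_charFun_mul_conj_div_sq h₁ h₁
  simp_rw [hsplit]
  rw [integral_sub ?_ hk₁₁, integral_sub (hk₀₁.const_mul 2) hk₀₀, integral_const_mul,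
    integral_one_sub_re_charFun_mul_conj_div_sq h₀ h₁,
    integral_one_sub_re_charFun_mul_conj_div_sq h₀ h₀,
    integral_one_sub_re_charFun_mul_conj_div_sq h₁ h₁]
  · field_simp [pi_ne_zero]
  · exact (hk₀₁.const_mul 2).sub hk₀₀
end

section
/- Energy distance via distribution functions in one dimension: for probability distributions P₀', P₁' on ℝ with finite first moments and CDFs F₀, F₁, the energy distance with α = 1 satisfies ε₁(P₀',P₁') = 2 ∫_{−∞}^{∞} (F₀(t) − F₁(t))² dt. -/
/-!
For real x, y, |x - y| is the Lebesgue measure of the set of t with x ≤ t < y or y ≤ t < x.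
Integrating over independent X ~ μ, Y ~ ν and exchanging the integrals (Tonelli) gives
E|X - Y| = ∫ μ(-∞, t] ν(t, ∞) + ν(-∞, t] μ(t, ∞) dt = ∫ F₀ + F₁ - 2 F₀ F₁ dt, finite under first
moments. The energy distance is then a combination of three such integrals, and pointwise
2 (F₀ + F₁ - 2 F₀ F₁) - (2 F₀ - 2 F₀²) - (2 F₁ - 2 F₁²) = 2 (F₀ - F₁)².
-/

open MeasureTheory ProbabilityTheory Set

lemma measurable_measure_Iic (μ : Measure ℝ) : Measurable fun t => μ (Iic t) :=
  Monotone.measurable fun _ _ h => measure_mono (Iic_subset_Iic.2 h)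

lemma measurable_measure_Ioi (μ : Measure ℝ) : Measurable fun t => μ (Ioi t) :=
  Antitone.measurable fun _ _ h => measure_mono (Ioi_subset_Ioi h)

section

variable {μ ν : Measure ℝ}

lemma lintegral_prod_ofReal_sub_eq_lintegral_Iic_mul_Ioi [SFinite μ] [SFinite ν] :
    ∫⁻ z, ENNReal.ofReal (z.2 - z.1) ∂(μ.prod ν) = ∫⁻ t, μ (Iic t) * ν (Ioi t) := by
  set S : Set ((ℝ × ℝ) × ℝ) := {p | p.1.1 ≤ p.2 ∧ p.2 < p.1.2}
  have hS : MeasurableSet S :=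
    (measurableSet_le measurable_fst.fst measurable_snd).inter
      (measurableSet_lt measurable_snd measurable_fst.snd)
  calc ∫⁻ z, ENNReal.ofReal (z.2 - z.1) ∂(μ.prod ν)
      = ∫⁻ z, volume (Prod.mk z ⁻¹' S) ∂(μ.prod ν) := by
        congr with z
        rw [← Real.volume_Ico]
        rfl
    _ = ((μ.prod ν).prod volume) S := (Measure.prod_apply hS).symm
    _ = ∫⁻ t, (μ.prod ν) ((fun z => (z, t)) ⁻¹' S) := Measure.prod_apply_symm hS
    _ = ∫⁻ t, μ (Iic t) * ν (Ioi t) := by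
        congr with t
        rw [← Measure.prod_prod]
        rfl

lemma ENNReal.ofReal_abs_sub_eq_add (a b : ℝ) :
    ENNReal.ofReal |a - b| = ENNReal.ofReal (b - a) + ENNReal.ofReal (a - b) := by
  rcases le_total a b with h | h
  · rw [abs_of_nonpos (sub_nonpos.2 h), ENNReal.ofReal_of_nonpos (sub_nonpos.2 h), add_zero, neg_sub]
  · rw [abs_of_nonneg (sub_nonneg.2 h), ENNReal.ofReal_of_nonpos (sub_nonpos.2 h), zero_add]

lemma measure_Ioi_eq_ofReal_one_sub_cdf [IsProbabilityMeasure μ] (t : ℝ) :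
    μ (Ioi t) = ENNReal.ofReal (1 - cdf μ t) := by
  rw [← compl_Iic, prob_compl_eq_one_sub measurableSet_Iic, ← ofReal_cdf,
    ENNReal.ofReal_sub _ (cdf_nonneg μ t), ENNReal.ofReal_one]

lemma lintegral_prod_ofReal_abs_sub [IsProbabilityMeasure μ] [IsProbabilityMeasure ν] :
    ∫⁻ z, ENNReal.ofReal |z.1 - z.2| ∂(μ.prod ν)
      = ∫⁻ t, ENNReal.ofReal (cdf μ t + cdf ν t - 2 * cdf μ t * cdf ν t) := by
  have h_swap : ∫⁻ z, ENNReal.ofReal (z.1 - z.2) ∂(μ.prod ν)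
      = ∫⁻ z, ENNReal.ofReal (z.2 - z.1) ∂(ν.prod μ) := by
    rw [← lintegral_prod_swap]
    rfl
  simp_rw [ENNReal.ofReal_abs_sub_eq_add]
  rw [lintegral_add_left (by fun_prop), h_swap, lintegral_prod_ofReal_sub_eq_lintegral_Iic_mul_Ioi,
    lintegral_prod_ofReal_sub_eq_lintegral_Iic_mul_Ioi, ← lintegral_add_left (by
      exact (measurable_measure_Iic μ).mul (measurable_measure_Ioi ν))]
  congr with t
  rw [← ofReal_cdf, ← ofReal_cdf, measure_Ioi_eq_ofReal_one_sub_cdf,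
    measure_Ioi_eq_ofReal_one_sub_cdf, ← ENNReal.ofReal_mul (cdf_nonneg μ t),
    ← ENNReal.ofReal_mul (cdf_nonneg ν t), ← ENNReal.ofReal_add]
  · congr 1
    ring
  · exact mul_nonneg (cdf_nonneg μ t) (sub_nonneg.2 (cdf_le_one ν t))
  · exact mul_nonneg (cdf_nonneg ν t) (sub_nonneg.2 (cdf_le_one μ t))

lemma integrable_abs_sub_prod_s17 [IsFiniteMeasure μ] [IsFiniteMeasure ν]
    (hμ : Integrable (fun x : ℝ => |x|) μ) (hν : Integrable (fun x : ℝ => |x|) ν) :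
    Integrable (fun z : ℝ × ℝ => |z.1 - z.2|) (μ.prod ν) :=
  ((hμ.comp_fst ν).add (hν.comp_snd μ)).mono' (by fun_prop)
    (ae_of_all _ fun z => by simpa using abs_sub z.1 z.2)

lemma cdf_add_cdf_sub_two_mul_nonneg (t : ℝ) :
    0 ≤ cdf μ t + cdf ν t - 2 * cdf μ t * cdf ν t := by
  nlinarith [cdf_nonneg μ t, cdf_le_one μ t, cdf_nonneg ν t, cdf_le_one ν t]

lemma measurable_cdf_add_cdf_sub_two_mul :
    Measurable fun t => cdf μ t + cdf ν t - 2 * cdf μ t * cdf ν t := by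
  have hμ := (cdf μ).mono.measurable
  have hν := (cdf ν).mono.measurable
  fun_prop

variable [IsProbabilityMeasure μ] [IsProbabilityMeasure ν]

lemma integrable_cdf_add_cdf_sub_two_mul
    (hμ : Integrable (fun x : ℝ => |x|) μ) (hν : Integrable (fun x : ℝ => |x|) ν) :
    Integrable fun t => cdf μ t + cdf ν t - 2 * cdf μ t * cdf ν t := by
  rw [← lintegral_ofReal_ne_top_iff_integrable
      measurable_cdf_add_cdf_sub_two_mul.aestronglyMeasurable
      (ae_of_all _ cdf_add_cdf_sub_two_mul_nonneg),
    ← lintegral_prod_ofReal_abs_sub, lintegral_ofReal_ne_top_iff_integrable (by fun_prop)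
      (ae_of_all _ fun _ => abs_nonneg _)]
  exact integrable_abs_sub_prod_s17 hμ hν

lemma integral_integral_abs_sub_eq_integral_cdf
    (hμ : Integrable (fun x : ℝ => |x|) μ) (hν : Integrable (fun x : ℝ => |x|) ν) :
    ∫ x, ∫ y, |x - y| ∂ν ∂μ = ∫ t, (cdf μ t + cdf ν t - 2 * cdf μ t * cdf ν t) := by
  rw [← integral_prod (fun z : ℝ × ℝ => |z.1 - z.2|) (integrable_abs_sub_prod_s17 hμ hν),
    integral_eq_lintegral_of_nonneg_ae (ae_of_all _ fun _ => abs_nonneg _) (by fun_prop),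
    integral_eq_lintegral_of_nonneg_ae (ae_of_all _ cdf_add_cdf_sub_two_mul_nonneg)
      measurable_cdf_add_cdf_sub_two_mul.aestronglyMeasurable,
    lintegral_prod_ofReal_abs_sub]

end

/-- Energy distance via distribution functions: for probability distributions P₀', P₁' on ℝ with
finite first moments and cumulative distribution functions F₀, F₁,
ε₁(P₀',P₁') = 2E|X−Y| − E|X−X'| − E|Y−Y'| = 2 ∫ (F₀(t) − F₁(t))² dt. -/
theorem energy_distance_eq_cdf_integral
    (P₀ P₁ : Measure ℝ) [IsProbabilityMeasure P₀] [IsProbabilityMeasure P₁]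
    (h₀ : Integrable (fun x : ℝ => |x|) P₀) (h₁ : Integrable (fun x : ℝ => |x|) P₁) :
    2 * (∫ x, ∫ y, |x - y| ∂P₁ ∂P₀)
      - (∫ x, ∫ x', |x - x'| ∂P₀ ∂P₀)
      - (∫ y, ∫ y', |y - y'| ∂P₁ ∂P₁)
      = 2 * ∫ t : ℝ, (cdf P₀ t - cdf P₁ t) ^ 2 := by
  have i₀₁ := integrable_cdf_add_cdf_sub_two_mul h₀ h₁
  have i₀₀ := integrable_cdf_add_cdf_sub_two_mul h₀ h₀
  have i₁₁ := integrable_cdf_add_cdf_sub_two_mul h₁ h₁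
  rw [integral_integral_abs_sub_eq_integral_cdf h₀ h₁,
    integral_integral_abs_sub_eq_integral_cdf h₀ h₀,
    integral_integral_abs_sub_eq_integral_cdf h₁ h₁, ← integral_const_mul,
    ← integral_sub (i₀₁.const_mul 2) i₀₀, ← integral_sub ?_ i₁₁,
    ← integral_const_mul]
  · congr with t
    ring
  · exact (i₀₁.const_mul 2).sub i₀₀
end
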